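/- Let V and Q be real Hilbert spaces, a : V × V → ℝ a continuous coercive symmetric bilinear form on the kernel Z = {v ∈ V : b(v,q)=0 ∀q ∈ Q}, and b : V × Q → ℝ continuous and satisfying the inf-sup condition: there exists β > 0 with sup_{v∈V, v≠0} b(v,q)/‖v‖_V ≥ β ‖q‖_Q for all q ∈ Q. Then for every f ∈ V' the saddle point problem: find (u,p) ∈ V × Q with a(u,v) + b(v,p) = f(v) ∀v ∈ V and b(u,q) = 0 ∀q ∈ Q, has a unique solution, and ‖u‖_V + ‖p‖_Q ≤ C ‖f‖_{V'} with C depending only on the coercivity, continuity, and inf-sup constants. -/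

import Mathlib

open MeasureTheory Metric Set

noncomputable section

/-- Points of the plane. -/
abbrev Pt : Type := ℝ × ℝ

/-- Evaluation of a bivariate polynomial at a point of the plane. -/
def pev (p : MvPolynomial (Fin 2) ℝ) (x : Pt) : ℝ :=
  MvPolynomial.eval (fun i => if i = 0 then x.1 else x.2) p

/-- Affine parametrization of the segment from `a` to `b`. -/
def ept (a b : Pt) (t : ℝ) : Pt := a + t • (b - a)

/-- Unit normal to the (nondegenerate) segment from `a` to `b`. -/
def unitNormal (a b : Pt) : Pt := ‖b - a‖⁻¹ • (b.2 - a.2, a.1 - b.1)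

/-- Euclidean inner product of the gradients of `f` and `g` at `x`. -/
def gradDot (f g : Pt → ℝ) (x : Pt) : ℝ :=
  fderiv ℝ f x (1, 0) * fderiv ℝ g x (1, 0) + fderiv ℝ f x (0, 1) * fderiv ℝ g x (0, 1)

/-- Pointwise Laplacian of `v` at `x`. -/
def lapl (v : Pt → ℝ) (x : Pt) : ℝ :=
  fderiv ℝ (fun y => fderiv ℝ v y (1, 0)) x (1, 0) +
  fderiv ℝ (fun y => fderiv ℝ v y (0, 1)) x (0, 1)

/-- `E` is an (open, bounded, nonempty) polygon whose boundary is the union of the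
given nondegenerate edges. -/
def IsPolygon (E : Set Pt) (edges : Finset (Pt × Pt)) : Prop :=
  IsOpen E ∧ Bornology.IsBounded E ∧ E.Nonempty ∧
    (∀ e ∈ edges, e.1 ≠ e.2) ∧ frontier E = ⋃ e ∈ edges, segment ℝ e.1 e.2

/-- `E` is star-shaped with respect to the ball of radius `r` centered at `x₀`. -/
def StarShapedWrt (E : Set Pt) (x₀ : Pt) (r : ℝ) : Prop :=
  ball x₀ r ⊆ E ∧ ∀ y ∈ ball x₀ r, ∀ x ∈ E, segment ℝ y x ⊆ E

/-- The local nonconforming virtual element space of order `k` on the polygon `E`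
with the given edges: functions in `H¹(E)` whose Laplacian is a polynomial of degree
`≤ k-2` and whose outward normal derivative on each edge is a polynomial of degree
`≤ k-1` (in the edge parametrization). -/
def VEk (k : ℕ) (E : Set Pt) (edges : Finset (Pt × Pt)) : Set (Pt → ℝ) :=
  {v | ContinuousOn v (closure E) ∧ DifferentiableOn ℝ v E ∧
    (∃ g : MvPolynomial (Fin 2) ℝ, (g.totalDegree : ℤ) ≤ (k : ℤ) - 2 ∧
      ∀ x ∈ E, lapl v x = pev g x) ∧
    (∀ e ∈ edges, ∃ q : Polynomial ℝ, (q.natDegree : ℤ) ≤ (k : ℤ) - 1 ∧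
      ∀ t ∈ Icc (0:ℝ) 1, fderiv ℝ v (ept e.1 e.2 t) (unitNormal e.1 e.2) = q.eval t)}

/-!
The inf-sup condition says `β ‖q‖ ≤ ‖b(·, q)‖_{V'}`, so `q ↦ b(·, q)` is injective with closed
range. Through the Riesz isomorphism, and since a closed subspace is its own double orthogonal
complement, that range consists exactly of the functionals vanishing on `Z = ker b`.
Lax–Milgram on `Z` gives `u ∈ Z` with `a(u, ·) = f` on `Z`; then `f - a(u, ·)` vanishes on `Z`
and hence equals `b(·, p)` for some `p`. Testing with `v = u` gives `‖u‖ ≤ ‖f‖ / α`, and the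
inf-sup bound gives `β ‖p‖ ≤ ‖f‖ + ‖a‖ ‖u‖`; applied to the difference of two solutions this
estimate yields uniqueness.
-/

section Normed

variable {V Q : Type*} [NormedAddCommGroup V] [NormedSpace ℝ V]
  [NormedAddCommGroup Q] [NormedSpace ℝ Q]

def IsSaddleSolution (a : V →L[ℝ] V →L[ℝ] ℝ) (b : V →L[ℝ] Q →L[ℝ] ℝ) (f : V →L[ℝ] ℝ)
    (up : V × Q) : Prop :=
  (∀ v, a up.1 v + b v up.2 = f v) ∧ ∀ q, b up.1 q = 0

variable {a : V →L[ℝ] V →L[ℝ] ℝ} {b : V →L[ℝ] Q →L[ℝ] ℝ} {α β : ℝ}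

theorem IsSaddleSolution.sub {f g : V →L[ℝ] ℝ} {up up' : V × Q}
    (h : IsSaddleSolution a b f up) (h' : IsSaddleSolution a b g up') :
    IsSaddleSolution a b (f - g) (up - up') := by
  refine ⟨fun v => ?_, fun q => ?_⟩
  · simp only [Prod.fst_sub, Prod.snd_sub, map_sub, sub_apply]
    linarith [h.1 v, h'.1 v]
  · simp [h.2 q, h'.2 q]

theorem mul_norm_le_norm_flip_apply
    (hinfsup : ∀ q : Q, ∀ ε > 0, ∃ v : V, v ≠ 0 ∧ (β - ε) * ‖q‖ * ‖v‖ ≤ b v q) (q : Q) :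
    β * ‖q‖ ≤ ‖b.flip q‖ := by
  refine le_of_forall_pos_le_add fun δ hδ => ?_
  have hq : 0 < ‖q‖ + 1 := by positivity
  obtain ⟨v, hv, hle⟩ := hinfsup q (δ / (‖q‖ + 1)) (div_pos hδ hq)
  have hbound : (β - δ / (‖q‖ + 1)) * ‖q‖ ≤ ‖b.flip q‖ := by
    refine le_of_mul_le_mul_right ?_ (norm_pos_iff.mpr hv)
    calc (β - δ / (‖q‖ + 1)) * ‖q‖ * ‖v‖ ≤ b v q := hle
      _ ≤ ‖b.flip q‖ * ‖v‖ := (le_abs_self _).trans ((b.flip q).le_opNorm v)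
  have hsmall : δ / (‖q‖ + 1) * ‖q‖ ≤ δ := by
    rw [div_mul_eq_mul_div, div_le_iff₀ hq]
    nlinarith [norm_nonneg q]
  linarith

theorem norm_le_inv_mul_norm_of_coercive {f : V →L[ℝ] ℝ} {u : V} (hα : 0 < α)
    (h : α * ‖u‖ ^ 2 ≤ f u) : ‖u‖ ≤ α⁻¹ * ‖f‖ := by
  rw [le_inv_mul_iff₀ hα]
  rcases (norm_nonneg u).eq_or_lt with hu | hu
  · rw [← hu, mul_zero]
    exact norm_nonneg f
  · refine le_of_mul_le_mul_right ?_ hu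
    calc α * ‖u‖ * ‖u‖ = α * ‖u‖ ^ 2 := by ring
      _ ≤ f u := h
      _ ≤ ‖f‖ * ‖u‖ := (le_abs_self _).trans (f.le_opNorm u)

theorem IsSaddleSolution.norm_add_norm_le {f : V →L[ℝ] ℝ} {up : V × Q} (hα : 0 < α)
    (hcoer : ∀ v : V, (∀ q : Q, b v q = 0) → α * ‖v‖ ^ 2 ≤ a v v) (hβ : 0 < β)
    (hinfsup : ∀ q : Q, β * ‖q‖ ≤ ‖b.flip q‖) (h : IsSaddleSolution a b f up) :
    ‖up.1‖ + ‖up.2‖ ≤ (α⁻¹ + β⁻¹ * (1 + ‖a‖ * α⁻¹)) * ‖f‖ := by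
  obtain ⟨u, p⟩ := up
  obtain ⟨heq, hker⟩ := h
  have hu : ‖u‖ ≤ α⁻¹ * ‖f‖ := by
    refine norm_le_inv_mul_norm_of_coercive hα ((hcoer u hker).trans_eq ?_)
    linarith [heq u, hker p]
  have hflip : b.flip p = f - a u := by
    ext v
    simp only [ContinuousLinearMap.flip_apply, sub_apply]
    linarith [heq v]
  have hp : ‖p‖ ≤ β⁻¹ * ((1 + ‖a‖ * α⁻¹) * ‖f‖) := by
    rw [le_inv_mul_iff₀ hβ]
    calc β * ‖p‖ ≤ ‖f - a u‖ := hflip ▸ hinfsup p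
      _ ≤ ‖f‖ + ‖a‖ * ‖u‖ := (norm_sub_le _ _).trans (by gcongr; exact a.le_opNorm u)
      _ ≤ ‖f‖ + ‖a‖ * (α⁻¹ * ‖f‖) := by gcongr
      _ = (1 + ‖a‖ * α⁻¹) * ‖f‖ := by ring
  calc ‖u‖ + ‖p‖ ≤ α⁻¹ * ‖f‖ + β⁻¹ * ((1 + ‖a‖ * α⁻¹) * ‖f‖) := add_le_add hu hp
    _ = (α⁻¹ + β⁻¹ * (1 + ‖a‖ * α⁻¹)) * ‖f‖ := by ring

theorem IsSaddleSolution.unique {f : V →L[ℝ] ℝ} {up up' : V × Q} (hα : 0 < α)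
    (hcoer : ∀ v : V, (∀ q : Q, b v q = 0) → α * ‖v‖ ^ 2 ≤ a v v) (hβ : 0 < β)
    (hinfsup : ∀ q : Q, β * ‖q‖ ≤ ‖b.flip q‖) (h : IsSaddleSolution a b f up)
    (h' : IsSaddleSolution a b f up') : up = up' := by
  have hbound := (h.sub h').norm_add_norm_le hα hcoer hβ hinfsup
  rw [sub_self, norm_zero, mul_zero] at hbound
  have h₁ : ‖(up - up').1‖ ≤ 0 := by linarith [norm_nonneg (up - up').2]
  have h₂ : ‖(up - up').2‖ ≤ 0 := by linarith [norm_nonneg (up - up').1]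
  exact sub_eq_zero.mp (Prod.ext (norm_le_zero_iff.mp h₁) (norm_le_zero_iff.mp h₂))

end Normed

section Hilbert

open RealInnerProductSpace

variable {V : Type*} [NormedAddCommGroup V] [InnerProductSpace ℝ V]

theorem exists_mem_forall_mem_apply_eq_of_coercive (K : Submodule ℝ V) [CompleteSpace K]
    {a : V →L[ℝ] V →L[ℝ] ℝ} {α : ℝ} (hα : 0 < α) (hcoer : ∀ v ∈ K, α * ‖v‖ ^ 2 ≤ a v v)
    (f : V →L[ℝ] ℝ) : ∃ u ∈ K, ∀ z ∈ K, a u z = f z := by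
  let aK : K →L[ℝ] K →L[ℝ] ℝ := (a.comp K.subtypeL).flip.comp K.subtypeL |>.flip
  have hcoerK : IsCoercive aK :=
    ⟨α, hα, fun v => by simpa [aK, sq, mul_assoc] using hcoer v v.2⟩
  let u := hcoerK.continuousLinearEquivOfBilin.symm
    ((InnerProductSpace.toDual ℝ K).symm (f.comp K.subtypeL))
  refine ⟨u, u.2, fun z hz => ?_⟩
  have := hcoerK.continuousLinearEquivOfBilin_apply u ⟨z, hz⟩
  simpa [u, aK, InnerProductSpace.toDual_symm_apply] using this.symm

variable [CompleteSpace V] {Q : Type*} [NormedAddCommGroup Q] [NormedSpace ℝ Q]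
  [CompleteSpace Q]

theorem exists_flip_apply_eq_of_ker_le {b : V →L[ℝ] Q →L[ℝ] ℝ} {β : ℝ} (hβ : 0 < β)
    (hinfsup : ∀ q : Q, β * ‖q‖ ≤ ‖b.flip q‖) (g : V →L[ℝ] ℝ)
    (hg : ∀ v ∈ b.ker, g v = 0) : ∃ p, b.flip p = g := by
  let R : Q →L[ℝ] V :=
    (InnerProductSpace.toDual ℝ V).symm.toContinuousLinearEquiv.toContinuousLinearMap ∘L b.flip
  have hR : ∀ q v, ⟪R q, v⟫ = b v q := fun q v => by
    simp [R, InnerProductSpace.toDual_symm_apply]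
  have hanti : AntilipschitzWith (Real.toNNReal β⁻¹) R := by
    refine R.antilipschitz_of_bound fun q => ?_
    rw [Real.coe_toNNReal _ (inv_nonneg.mpr hβ.le), le_inv_mul_iff₀ hβ]
    simpa [R] using hinfsup q
  have hclosed : IsClosed (R.range : Set V) := by
    simpa [LinearMap.coe_range] using hanti.isClosed_range R.uniformContinuous
  have := hclosed.completeSpace_coe
  have hw : (InnerProductSpace.toDual ℝ V).symm g ∈ R.range := by
    rw [← R.range.orthogonal_orthogonal, Submodule.mem_orthogonal]
    intro x hx
    have hxker : x ∈ b.ker := LinearMap.mem_ker.mpr <| ContinuousLinearMap.ext fun q => by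
      rw [ContinuousLinearMap.coe_coe, zero_apply, ← hR]
      exact (Submodule.mem_orthogonal _ _).mp hx (R q) ⟨q, rfl⟩
    rw [real_inner_comm, InnerProductSpace.toDual_symm_apply, hg x hxker]
  obtain ⟨p, hp : R p = _⟩ := hw
  refine ⟨p, ContinuousLinearMap.ext fun v => ?_⟩
  rw [ContinuousLinearMap.flip_apply, ← hR, hp, InnerProductSpace.toDual_symm_apply]

theorem exists_isSaddleSolution {a : V →L[ℝ] V →L[ℝ] ℝ} {b : V →L[ℝ] Q →L[ℝ] ℝ} {α β : ℝ}
    (hα : 0 < α) (hcoer : ∀ v : V, (∀ q : Q, b v q = 0) → α * ‖v‖ ^ 2 ≤ a v v) (hβ : 0 < β)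
    (hinfsup : ∀ q : Q, β * ‖q‖ ≤ ‖b.flip q‖) (f : V →L[ℝ] ℝ) :
    ∃ up, IsSaddleSolution a b f up := by
  have hker : ∀ v, v ∈ b.ker ↔ ∀ q, b v q = 0 := fun v => by
    rw [LinearMap.mem_ker, ContinuousLinearMap.ext_iff]; rfl
  obtain ⟨u, hu, hau⟩ := exists_mem_forall_mem_apply_eq_of_coercive b.ker hα
    (fun v hv => hcoer v ((hker v).mp hv)) f
  obtain ⟨p, hp⟩ := exists_flip_apply_eq_of_ker_le hβ hinfsup (f - a u) fun v hv => by
    rw [sub_apply, hau v hv, sub_self]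
  refine ⟨(u, p), fun v => ?_, (hker u).mp hu⟩
  have hv := congr($hp v)
  rw [ContinuousLinearMap.flip_apply, sub_apply] at hv
  dsimp only
  linarith

end Hilbert

theorem stmt5_general {V Q : Type*}
    [NormedAddCommGroup V] [InnerProductSpace ℝ V] [CompleteSpace V]
    [NormedAddCommGroup Q] [InnerProductSpace ℝ Q] [CompleteSpace Q]
    (a : V →L[ℝ] V →L[ℝ] ℝ) (b : V →L[ℝ] Q →L[ℝ] ℝ)
    (α : ℝ) (hα : 0 < α)
    (hcoer : ∀ v : V, (∀ q : Q, b v q = 0) → α * ‖v‖ ^ 2 ≤ a v v)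
    (β : ℝ) (hβ : 0 < β)
    (hinfsup : ∀ q : Q, ∀ ε > 0, ∃ v : V, v ≠ 0 ∧ (β - ε) * ‖q‖ * ‖v‖ ≤ b v q) :
    ∃ C > 0, ∀ f : V →L[ℝ] ℝ,
      (∃! up : V × Q, (∀ v, a up.1 v + b v up.2 = f v) ∧ (∀ q, b up.1 q = 0)) ∧
      ∀ up : V × Q, ((∀ v, a up.1 v + b v up.2 = f v) ∧ (∀ q, b up.1 q = 0)) →
        ‖up.1‖ + ‖up.2‖ ≤ C * ‖f‖ := by
  have hflip := mul_norm_le_norm_flip_apply hinfsup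
  refine ⟨α⁻¹ + β⁻¹ * (1 + ‖a‖ * α⁻¹), by positivity, fun f => ⟨?_, fun up h =>
    IsSaddleSolution.norm_add_norm_le hα hcoer hβ hflip h⟩⟩
  obtain ⟨up, hup⟩ := exists_isSaddleSolution hα hcoer hβ hflip f
  exact ⟨up, hup, fun up' h' => IsSaddleSolution.unique hα hcoer hβ hflip h' hup⟩

/-- Brezzi theorem: the saddle point problem with a form `a` coercive on
the kernel of `b` and `b` satisfying the inf-sup condition has a unique solution,
depending continuously on the datum `f`. -/
theorem stmt5 {V Q : Type*}
    [NormedAddCommGroup V] [InnerProductSpace ℝ V] [CompleteSpace V]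
    [NormedAddCommGroup Q] [InnerProductSpace ℝ Q] [CompleteSpace Q]
    (a : V →L[ℝ] V →L[ℝ] ℝ) (b : V →L[ℝ] Q →L[ℝ] ℝ)
    (hasym : ∀ u v, a u v = a v u)
    (α : ℝ) (hα : 0 < α)
    (hcoer : ∀ v : V, (∀ q : Q, b v q = 0) → α * ‖v‖ ^ 2 ≤ a v v)
    (β : ℝ) (hβ : 0 < β)
    (hinfsup : ∀ q : Q, ∀ ε > 0, ∃ v : V, v ≠ 0 ∧ (β - ε) * ‖q‖ * ‖v‖ ≤ b v q) :
    ∃ C > 0, ∀ f : V →L[ℝ] ℝ,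
      (∃! up : V × Q, (∀ v, a up.1 v + b v up.2 = f v) ∧ (∀ q, b up.1 q = 0)) ∧
      ∀ up : V × Q, ((∀ v, a up.1 v + b v up.2 = f v) ∧ (∀ q, b up.1 q = 0)) →
        ‖up.1‖ + ‖up.2‖ ≤ C * ‖f‖ :=
  stmt5_general a b α hα hcoer β hβ hinfsup
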